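/- For s ∈ ℕ with s ≥ 1 and the classical Stirling numbers c(n,k) (unsigned first kind) and S(n,k) (second kind), the generalized Stirling numbers S_{s,h}(n,k), defined by the recurrence S_{s,h}(n,k) = S_{s,h}(n-1,k-1) + h·(s(n-1)−(s-1)k)·S_{s,h}(n-1,k) with S_{s,h}(n,0)=S_{s,h}(0,n)=δ_{0,n}, satisfy S_{s,h}(n,k) = h^{n−k} · ∑_{j=k}^{n} s^{n−j}·(1−s)^{j−k}·c(n,j)·S(j,k). -/

import Mathlib

open Finset

/-- Unsigned Stirling numbers of the first kind. -/
def stirC : ℕ → ℕ → ℕ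
  | 0, 0 => 1
  | 0, _ + 1 => 0
  | n + 1, 0 => n * stirC n 0
  | n + 1, k + 1 => stirC n k + n * stirC n (k + 1)

/-- Stirling numbers of the second kind. -/
def stirS : ℕ → ℕ → ℕ
  | 0, 0 => 1
  | 0, _ + 1 => 0
  | _ + 1, 0 => 0
  | n + 1, k + 1 => stirS n k + (k + 1) * stirS n (k + 1)

/-- The generalized Stirling numbers `S_{s,h}(n,k)`, satisfying
`S(n,k) = S(n-1,k-1) + h (s(n-1)-(s-1)k) S(n-1,k)` with `S(n,0)=S(0,n)=δ_{0,n}`. -/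
def Ssh {K : Type*} [CommRing K] (s : ℕ) (h : K) : ℕ → ℕ → K
  | 0, 0 => 1
  | 0, _ + 1 => 0
  | _ + 1, 0 => 0
  | n + 1, k + 1 =>
      Ssh s h n k + h * (((s : ℤ) * n - ((s : ℤ) - 1) * (k + 1) : ℤ) : K) * Ssh s h n (k + 1)

/-!
Weight the Stirling triangles as `C_a(n,j) = a^(n-j) c(n,j)` and `S_b(j,k) = b^(j-k) S(j,k)`.
Their recurrences `C_a(n+1,j+1) = C_a(n,j) + a n C_a(n,j+1)` and
`S_b(j+1,k+1) = S_b(j,k) + b (k+1) S_b(j,k+1)` combine, after an index shift, into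
`T(n+1,k+1) = T(n,k) + (a n + b (k+1)) T(n,k+1)` for the matrix product `T = C_a S_b`.
For `a = s`, `b = 1 - s` this is the recurrence of `S_{s,1}`, and a general `h` only rescales
`S_{s,h}(n,k)` by `h^(n-k)`.
-/

lemma stirC_eq_zero_of_lt : ∀ {n j : ℕ}, n < j → stirC n j = 0
  | 0, _ + 1, _ => rfl
  | n + 1, j + 1, h => by
      rw [stirC, stirC_eq_zero_of_lt (by omega), stirC_eq_zero_of_lt (by omega), mul_zero, add_zero]

lemma stirS_eq_zero_of_lt : ∀ {j k : ℕ}, j < k → stirS j k = 0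
  | 0, _ + 1, _ => rfl
  | j + 1, k + 1, h => by
      rw [stirS, stirS_eq_zero_of_lt (by omega), stirS_eq_zero_of_lt (by omega), mul_zero, add_zero]

lemma stirC_succ_zero : ∀ n, stirC (n + 1) 0 = 0
  | 0 => rfl
  | n + 1 => by rw [stirC, stirC_succ_zero n, mul_zero]

section Weighted

variable {K : Type*} [CommRing K]

def weightedStirC (a : K) (n j : ℕ) : K := a ^ (n - j) * stirC n j

def weightedStirS (b : K) (j k : ℕ) : K := b ^ (j - k) * stirS j k

lemma weightedStirC_succ_zero (a : K) (n : ℕ) : weightedStirC a (n + 1) 0 = 0 := by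
  simp [weightedStirC, stirC_succ_zero]

lemma weightedStirC_eq_zero_of_lt (a : K) {n j : ℕ} (h : n < j) : weightedStirC a n j = 0 := by
  simp [weightedStirC, stirC_eq_zero_of_lt h]

lemma weightedStirS_eq_zero_of_lt (b : K) {j k : ℕ} (h : j < k) : weightedStirS b j k = 0 := by
  simp [weightedStirS, stirS_eq_zero_of_lt h]

lemma weightedStirS_succ_zero (b : K) (j : ℕ) : weightedStirS b (j + 1) 0 = 0 := by
  simp [weightedStirS, stirS]

lemma weightedStirC_succ_succ (a : K) (n j : ℕ) :
    weightedStirC a (n + 1) (j + 1) =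
      weightedStirC a n j + a * n * weightedStirC a n (j + 1) := by
  rcases lt_or_ge j n with hjn | hnj
  · have hexp : n - j = n - (j + 1) + 1 := by omega
    simp only [weightedStirC, stirC, Nat.add_sub_add_right, Nat.cast_add, Nat.cast_mul]
    rw [hexp, pow_succ]
    ring
  · simp [weightedStirC, stirC, stirC_eq_zero_of_lt (Nat.lt_succ_of_le hnj)]

lemma weightedStirS_succ_succ (b : K) (j k : ℕ) :
    weightedStirS b (j + 1) (k + 1) =
      weightedStirS b j k + b * (k + 1) * weightedStirS b j (k + 1) := by
  rcases lt_or_ge k j with hkj | hjk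
  · have hexp : j - k = j - (k + 1) + 1 := by omega
    simp only [weightedStirS, stirS, Nat.add_sub_add_right, Nat.cast_add, Nat.cast_mul,
      Nat.cast_one]
    rw [hexp, pow_succ]
    ring
  · simp [weightedStirS, stirS, stirS_eq_zero_of_lt (Nat.lt_succ_of_le hjk)]

/-- The Hsu–Shiue numbers with parameters `(α, β, r) = (-a, b, 0)`. -/
def genStir (a b : K) (n k : ℕ) : K :=
  ∑ j ∈ range (n + 1), weightedStirC a n j * weightedStirS b j k

lemma genStir_eq_zero_of_lt (a b : K) {n k : ℕ} (h : n < k) : genStir a b n k = 0 :=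
  sum_eq_zero fun j hj => by
    rw [weightedStirS_eq_zero_of_lt b (by rw [mem_range] at hj; omega), mul_zero]

lemma genStir_zero_zero (a b : K) : genStir a b 0 0 = 1 := by
  simp [genStir, weightedStirC, weightedStirS, stirC, stirS]

lemma genStir_succ_zero (a b : K) (n : ℕ) : genStir a b (n + 1) 0 = 0 := by
  rw [genStir, sum_range_succ', weightedStirC_succ_zero, zero_mul, add_zero]
  exact sum_eq_zero fun j _ => by rw [weightedStirS_succ_zero, mul_zero]

lemma genStir_succ_succ (a b : K) (n k : ℕ) :
    genStir a b (n + 1) (k + 1) =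
      genStir a b n k + (a * n + b * (k + 1)) * genStir a b n (k + 1) := by
  have hshift : ∑ j ∈ range (n + 1), weightedStirC a n (j + 1) * weightedStirS b (j + 1) (k + 1) =
      genStir a b n (k + 1) := by
    have h := sum_range_succ' (fun j => weightedStirC a n j * weightedStirS b j (k + 1)) (n + 1)
    rw [sum_range_succ, weightedStirS_eq_zero_of_lt b (Nat.succ_pos k),
      weightedStirC_eq_zero_of_lt a (Nat.lt_succ_self n)] at h
    simpa [genStir] using h.symm
  have hterm : ∀ j ∈ range (n + 1),
      weightedStirC a (n + 1) (j + 1) * weightedStirS b (j + 1) (k + 1) =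
        weightedStirC a n j * weightedStirS b j k +
          b * (k + 1) * (weightedStirC a n j * weightedStirS b j (k + 1)) +
            a * n * (weightedStirC a n (j + 1) * weightedStirS b (j + 1) (k + 1)) := by
    intro j _
    rw [weightedStirC_succ_succ, weightedStirS_succ_succ]
    ring
  rw [genStir, sum_range_succ', weightedStirC_succ_zero, zero_mul, add_zero, sum_congr rfl hterm,
    sum_add_distrib, sum_add_distrib, ← mul_sum, ← mul_sum, hshift, genStir, genStir]
  ring

lemma genStir_eq_sum_Icc (a b : K) (n k : ℕ) :
    genStir a b n k = ∑ j ∈ Icc k n, a ^ (n - j) * b ^ (j - k) * stirC n j * stirS j k := by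
  have hsub : ∑ j ∈ Icc k n, a ^ (n - j) * b ^ (j - k) * stirC n j * stirS j k =
      ∑ j ∈ range (n + 1), a ^ (n - j) * b ^ (j - k) * stirC n j * stirS j k := by
    refine sum_subset (fun j hj => by rw [mem_Icc] at hj; rw [mem_range]; omega) fun j hj hjk => ?_
    rw [stirS_eq_zero_of_lt (by rw [mem_range] at hj; rw [mem_Icc] at hjk; omega), Nat.cast_zero, mul_zero]
  rw [hsub, genStir]
  exact sum_congr rfl fun j _ => by rw [weightedStirC, weightedStirS]; ring

lemma Ssh_eq_pow_mul_genStir (s : ℕ) (h : K) :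
    ∀ n k, Ssh s h n k = h ^ (n - k) * genStir (s : K) (1 - s) n k
  | 0, 0 => by rw [Ssh, genStir_zero_zero, mul_one, pow_zero]
  | 0, k + 1 => by rw [Ssh, genStir_eq_zero_of_lt _ _ (Nat.succ_pos k), mul_zero]
  | n + 1, 0 => by rw [Ssh, genStir_succ_zero, mul_zero]
  | n + 1, k + 1 => by
    have hcoef : ((s * n - (s - 1) * (k + 1) : ℤ) : K) = s * n + (1 - s) * (k + 1) := by
      push_cast
      ring
    rw [Ssh, Ssh_eq_pow_mul_genStir s h n k, Ssh_eq_pow_mul_genStir s h n (k + 1),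
      genStir_succ_succ, Nat.add_sub_add_right, hcoef]
    rcases lt_or_ge k n with hkn | hnk
    · rw [show n - k = n - (k + 1) + 1 by omega, pow_succ]
      ring
    · rw [genStir_eq_zero_of_lt _ _ (Nat.lt_succ_of_le hnk)]
      ring

end Weighted

theorem stmt_16_general {K : Type*} [CommRing K] (s : ℕ) (h : K) (n k : ℕ) :
    Ssh s h n k =
      h ^ (n - k) *
        ∑ j ∈ Finset.Icc k n,
          (s : K) ^ (n - j) * (1 - (s : K)) ^ (j - k) * (stirC n j : K) * (stirS j k : K) := by
  rw [Ssh_eq_pow_mul_genStir, genStir_eq_sum_Icc]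

theorem stmt_16 {K : Type*} [CommRing K] (s : ℕ) (hs : 1 ≤ s) (h : K) (n k : ℕ) :
    Ssh s h n k =
      h ^ (n - k) *
        ∑ j ∈ Finset.Icc k n,
          (s : K) ^ (n - j) * (1 - (s : K)) ^ (j - k) * (stirC n j : K) * (stirS j k : K) :=
  stmt_16_general s h n k
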